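/- Let (Ω, Σ, μ) be a measure space and f, g, h ∈ L²(Ω, 𝕜) (𝕜 = ℝ or ℂ) with ∫_Ω |h(s)|² dμ(s) = 1, and let φ, Φ, γ, Γ ∈ 𝕜 satisfy Re(Φ·conj(φ)) > 0 and Re(Γ·conj(γ)) > 0. If ∫_Ω Re[(Φh(s) − f(s))·(conj(f(s)) − conj(φ)·conj(h(s)))] dμ(s) ≥ 0 and ∫_Ω Re[(Γh(s) − g(s))·(conj(g(s)) − conj(γ)·conj(h(s)))] dμ(s) ≥ 0, then |∫_Ω f(s)conj(g(s)) dμ − ∫_Ω f(s)conj(h(s)) dμ · ∫_Ω h(s)conj(g(s)) dμ| ≤ (1/4)·M(φ,Φ)·M(γ,Γ)·|∫_Ω f(s)conj(h(s)) dμ · ∫_Ω h(s)conj(g(s)) dμ|, where M(φ,Φ) := [((|Φ| − |φ|)² + 4(|Φ·conj(φ)| − Re(Φ·conj(φ))))/Re(Φ·conj(φ))]^{1/2}. -/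

import Mathlib

/-! In `L²(μ)` the hypotheses say `re ⟪x - φ • e, Φ • e - x⟫ ≥ 0` for `x = f`, `e = h`, a unit
vector. Expanding this and bounding `re (Φ * conj α) + re (conj φ * α) ≤ (‖Φ‖ + ‖φ‖) ‖α‖`, where
`α = ⟪e, x⟫`, gives `‖x‖² ≤ (1 + M²/4) ‖α‖²` by AM-GM, i.e. the component of `x` orthogonal to `e`
has norm at most `M/2 · ‖α‖`. The left-hand side of the theorem is the inner product of the
orthogonal components of `f` and `g`, so Cauchy–Schwarz finishes. -/

open MeasureTheory

/-- The constant `M(c, C)`. -/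
noncomputable def grussM {𝕜 : Type*} [RCLike 𝕜] (c C : 𝕜) : ℝ :=
  Real.sqrt (((‖C‖ - ‖c‖) ^ 2 +
      4 * (‖C * starRingEnd 𝕜 c‖ - RCLike.re (C * starRingEnd 𝕜 c))) /
    RCLike.re (C * starRingEnd 𝕜 c))

section

open RCLike ComplexConjugate InnerProductSpace

variable {𝕜 : Type*} [RCLike 𝕜]

theorem grussM_nonneg (c C : 𝕜) : 0 ≤ grussM c C := Real.sqrt_nonneg _

theorem grussM_sq_add_four {c C : 𝕜} (hcC : 0 < re (C * conj c)) :
    grussM c C ^ 2 + 4 = (‖C‖ + ‖c‖) ^ 2 / re (C * conj c) := by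
  have hre := re_le_norm (C * conj c)
  rw [norm_mul, norm_conj] at hre
  rw [grussM, Real.sq_sqrt, norm_mul, norm_conj]
  · field_simp
    ring
  · rw [norm_mul, norm_conj]
    exact div_nonneg (by nlinarith [sq_nonneg (‖C‖ - ‖c‖)]) hcC.le

section InnerProductSpace

variable {E : Type*} [NormedAddCommGroup E] [InnerProductSpace 𝕜 E] {e : E}

theorem norm_sub_inner_smul_sq (he : ‖e‖ = 1) (x : E) :
    ‖x - ⟪e, x⟫_𝕜 • e‖ ^ 2 = ‖x‖ ^ 2 - ‖⟪e, x⟫_𝕜‖ ^ 2 := by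
  rw [norm_sub_sq (𝕜 := 𝕜), inner_smul_right, norm_smul, he, ← inner_conj_symm, RCLike.conj_mul,
    norm_conj, ← ofReal_pow, ofReal_re]
  ring

theorem re_inner_sub_smul_smul_sub (he : ‖e‖ = 1) (x : E) (φ Φ : 𝕜) :
    re ⟪x - φ • e, Φ • e - x⟫_𝕜 =
      re (Φ * conj ⟪e, x⟫_𝕜) + re (conj φ * ⟪e, x⟫_𝕜) - re (Φ * conj φ) - ‖x‖ ^ 2 := by
  simp only [inner_sub_left, inner_sub_right, inner_smul_left, inner_smul_right,
    inner_self_eq_one_of_norm_eq_one he,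
    ← inner_conj_symm x e, map_sub, inner_self_eq_norm_sq, mul_one]
  rw [mul_sub, map_sub]
  ring

theorem norm_sq_le_of_re_inner_nonneg (he : ‖e‖ = 1) {x : E} {φ Φ : 𝕜}
    (hφΦ : 0 < re (Φ * conj φ)) (hx : 0 ≤ re ⟪x - φ • e, Φ • e - x⟫_𝕜) :
    ‖x‖ ^ 2 ≤ (grussM φ Φ ^ 2 / 4 + 1) * ‖⟪e, x⟫_𝕜‖ ^ 2 := by
  have hΦ : re (Φ * conj ⟪e, x⟫_𝕜) ≤ ‖Φ‖ * ‖⟪e, x⟫_𝕜‖ := by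
    simpa only [norm_mul, norm_conj] using re_le_norm (Φ * conj ⟪e, x⟫_𝕜)
  have hφ : re (conj φ * ⟪e, x⟫_𝕜) ≤ ‖φ‖ * ‖⟪e, x⟫_𝕜‖ := by
    simpa only [norm_mul, norm_conj] using re_le_norm (conj φ * ⟪e, x⟫_𝕜)
  set a := ‖⟪e, x⟫_𝕜‖
  set r := re (Φ * conj φ)
  have hlin : ‖x‖ ^ 2 ≤ (‖Φ‖ + ‖φ‖) * a - r := by
    rw [re_inner_sub_smul_smul_sub he] at hx
    linarith
  have hamgm : (‖Φ‖ + ‖φ‖) * a - r ≤ (‖Φ‖ + ‖φ‖) ^ 2 / r / 4 * a ^ 2 := by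
    rw [div_div, div_mul_eq_mul_div, le_div_iff₀ (by positivity)]
    nlinarith [sq_nonneg ((‖Φ‖ + ‖φ‖) * a - 2 * r)]
  rw [← grussM_sq_add_four hφΦ] at hamgm
  linarith

theorem norm_sub_inner_smul_le_of_re_inner_nonneg (he : ‖e‖ = 1) {x : E} {φ Φ : 𝕜}
    (hφΦ : 0 < re (Φ * conj φ)) (hx : 0 ≤ re ⟪x - φ • e, Φ • e - x⟫_𝕜) :
    ‖x - ⟪e, x⟫_𝕜 • e‖ ≤ grussM φ Φ / 2 * ‖⟪e, x⟫_𝕜‖ := by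
  have hM := grussM_nonneg φ Φ
  rw [← pow_le_pow_iff_left₀ (norm_nonneg _) (by positivity) two_ne_zero,
    norm_sub_inner_smul_sq he]
  nlinarith [norm_sq_le_of_re_inner_nonneg he hφΦ hx]

theorem inner_sub_inner_smul_sub_inner_smul (he : ‖e‖ = 1) (x y : E) :
    ⟪y - ⟪e, y⟫_𝕜 • e, x - ⟪e, x⟫_𝕜 • e⟫_𝕜 = ⟪y, x⟫_𝕜 - ⟪e, x⟫_𝕜 * ⟪y, e⟫_𝕜 := by
  simp only [inner_sub_left, inner_sub_right, inner_smul_left, inner_smul_right,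
    inner_self_eq_one_of_norm_eq_one he,
    inner_conj_symm]
  ring

theorem norm_inner_sub_inner_mul_inner_le (he : ‖e‖ = 1) {x y : E} {φ Φ γ Γ : 𝕜}
    (hφΦ : 0 < re (Φ * conj φ)) (hγΓ : 0 < re (Γ * conj γ))
    (hx : 0 ≤ re ⟪x - φ • e, Φ • e - x⟫_𝕜) (hy : 0 ≤ re ⟪y - γ • e, Γ • e - y⟫_𝕜) :
    ‖⟪y, x⟫_𝕜 - ⟪e, x⟫_𝕜 * ⟪y, e⟫_𝕜‖ ≤
      1 / 4 * grussM φ Φ * grussM γ Γ * ‖⟪e, x⟫_𝕜 * ⟪y, e⟫_𝕜‖ := by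
  have hMφ := grussM_nonneg φ Φ
  have hMγ := grussM_nonneg γ Γ
  have hye : ‖⟪y, e⟫_𝕜‖ = ‖⟪e, y⟫_𝕜‖ := by rw [← inner_conj_symm, norm_conj]
  calc ‖⟪y, x⟫_𝕜 - ⟪e, x⟫_𝕜 * ⟪y, e⟫_𝕜‖
      = ‖⟪y - ⟪e, y⟫_𝕜 • e, x - ⟪e, x⟫_𝕜 • e⟫_𝕜‖ := by
        rw [inner_sub_inner_smul_sub_inner_smul he]
    _ ≤ ‖y - ⟪e, y⟫_𝕜 • e‖ * ‖x - ⟪e, x⟫_𝕜 • e‖ := norm_inner_le_norm _ _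
    _ ≤ (grussM γ Γ / 2 * ‖⟪e, y⟫_𝕜‖) * (grussM φ Φ / 2 * ‖⟪e, x⟫_𝕜‖) := by
        gcongr
        · exact norm_sub_inner_smul_le_of_re_inner_nonneg he hγΓ hy
        · exact norm_sub_inner_smul_le_of_re_inner_nonneg he hφΦ hx
    _ = 1 / 4 * grussM φ Φ * grussM γ Γ * ‖⟪e, x⟫_𝕜 * ⟪y, e⟫_𝕜‖ := by
        rw [norm_mul, hye]
        ring

end InnerProductSpace

namespace MeasureTheory.MemLp

variable {Ω : Type*} [MeasurableSpace Ω] {μ : Measure Ω} {f g h : Ω → 𝕜}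

theorem inner_toLp_toLp (hf : MemLp f 2 μ) (hg : MemLp g 2 μ) :
    ⟪hf.toLp f, hg.toLp g⟫_𝕜 = ∫ s, g s * conj (f s) ∂μ := by
  rw [L2.inner_def]
  refine integral_congr_ae ?_
  filter_upwards [hf.coeFn_toLp, hg.coeFn_toLp] with s hfs hgs
  rw [RCLike.inner_apply, hfs, hgs]

theorem re_inner_toLp_sub_smul_smul_sub (hf : MemLp f 2 μ) (hh : MemLp h 2 μ) (φ Φ : 𝕜) :
    RCLike.re ⟪hf.toLp f - φ • hh.toLp h, Φ • hh.toLp h - hf.toLp f⟫_𝕜 =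
      ∫ s, RCLike.re ((Φ * h s - f s) * (conj (f s) - conj φ * conj (h s))) ∂μ := by
  have hl : MemLp (f - φ • h) 2 μ := hf.sub (hh.const_smul φ)
  have hr : MemLp (Φ • h - f) 2 μ := (hh.const_smul Φ).sub hf
  rw [show hf.toLp f - φ • hh.toLp h = hl.toLp _ from rfl,
    show Φ • hh.toLp h - hf.toLp f = hr.toLp _ from rfl, inner_toLp_toLp,
    ← integral_re (f := fun s => (Φ • h - f) s * conj ((f - φ • h) s))
      (hr.integrable_mul hl.star)]
  simp [mul_comm]

theorem norm_toLp_eq_one (hh : MemLp h 2 μ) (hh1 : ∫ s, ‖h s‖ ^ 2 ∂μ = 1) :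
    ‖hh.toLp h‖ = 1 := by
  have hinner : ⟪hh.toLp h, hh.toLp h⟫_𝕜 = 1 := by
    simp_rw [inner_toLp_toLp, mul_conj, ← ofReal_pow, integral_ofReal, hh1, ofReal_one]
  rw [inner_self_eq_norm_sq_to_K] at hinner
  exact (pow_eq_one_iff_of_nonneg (norm_nonneg _) two_ne_zero).1 (by exact_mod_cast hinner)

end MeasureTheory.MemLp

end

/-- **A Grüss type integral inequality** (Proposition 1). -/
theorem gruss_integral {Ω 𝕜 : Type*} [MeasurableSpace Ω] [RCLike 𝕜]
    (μ : Measure Ω) (f g h : Ω → 𝕜)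
    (hf : MemLp f 2 μ) (hg : MemLp g 2 μ) (hh : MemLp h 2 μ)
    (hh1 : ∫ s, ‖h s‖ ^ 2 ∂μ = 1)
    (φ Φ γ Γ : 𝕜)
    (hφΦ : 0 < RCLike.re (Φ * starRingEnd 𝕜 φ))
    (hγΓ : 0 < RCLike.re (Γ * starRingEnd 𝕜 γ))
    (h1 : 0 ≤ ∫ s, RCLike.re ((Φ * h s - f s) *
      (starRingEnd 𝕜 (f s) - starRingEnd 𝕜 φ * starRingEnd 𝕜 (h s))) ∂μ)
    (h2 : 0 ≤ ∫ s, RCLike.re ((Γ * h s - g s) *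
      (starRingEnd 𝕜 (g s) - starRingEnd 𝕜 γ * starRingEnd 𝕜 (h s))) ∂μ) :
    ‖(∫ s, f s * starRingEnd 𝕜 (g s) ∂μ) -
        (∫ s, f s * starRingEnd 𝕜 (h s) ∂μ) * ∫ s, h s * starRingEnd 𝕜 (g s) ∂μ‖ ≤
      (1 / 4 : ℝ) * grussM φ Φ * grussM γ Γ *
        ‖(∫ s, f s * starRingEnd 𝕜 (h s) ∂μ) * ∫ s, h s * starRingEnd 𝕜 (g s) ∂μ‖ := by
  have hx := h1.trans_eq (hf.re_inner_toLp_sub_smul_smul_sub hh φ Φ).symm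
  have hy := h2.trans_eq (hg.re_inner_toLp_sub_smul_smul_sub hh γ Γ).symm
  simpa only [MemLp.inner_toLp_toLp] using
    norm_inner_sub_inner_mul_inner_le (hh.norm_toLp_eq_one hh1) hφΦ hγΓ hx hy
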